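/- arXiv:0802.0024 — 5 statements merged into one kernel-verified Lean document; each statement's English description precedes it below -/
import Mathlib

section
/- Let G be a finite simple graph with vertex set V, let k ≥ 1 be an integer, and let V₁,…,V_k be independent sets of G of equal cardinality that partition V. Let a₁,…,a_k be k pairwise distinct new vertices not in V, let G̃ be the graph obtained from G by adding a₁,…,a_k as isolated vertices (the edges of G̃ are exactly the edges of G), and set Ṽᵢ := Vᵢ ∪ {aᵢ} for each i. Then there exists an independent set I of G with |I ∩ Vᵢ| = 1 for every i ∈ {1,…,k} if and only if there exists an independent set Ĩ of G̃ with |Ĩ ∩ Ṽᵢ| = 2 for every i ∈ {1,…,k}. -/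
/-- An independent set of a simple graph: no two of its vertices are adjacent. -/
def IsIndep {α : Type*} (G : SimpleGraph α) (I : Finset α) : Prop :=
  ∀ u ∈ I, ∀ v ∈ I, ¬ G.Adj u v

/-- The graph `G̃` obtained from `G` by adding `k` new isolated vertices
`a₁, …, a_k` (modelled as the right summand `Fin k`): its edges are exactly
the edges of `G`. -/
def addIsolated {α : Type*} (G : SimpleGraph α) (k : ℕ) : SimpleGraph (α ⊕ Fin k) where
  Adj x y := ∃ u v, x = Sum.inl u ∧ y = Sum.inl v ∧ G.Adj u v
  symm := by
    constructor
    rintro x y ⟨u, v, rfl, rfl, h⟩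
    exact ⟨v, u, rfl, rfl, G.symm.symm _ _ h⟩
  loopless := by
    constructor
    rintro x ⟨u, v, rfl, h, hadj⟩
    cases Sum.inl.inj h
    exact G.loopless.irrefl u hadj

/-!
An independent set `I` meeting every `Vᵢ` once extends to `I ∪ {a₁, …, a_k}`, which meets every
`Ṽᵢ` twice. Conversely, an independent set `Ĩ` meeting `Ṽᵢ = Vᵢ ∪ {aᵢ}` twice meets `Vᵢ` at least
once, so choosing one such vertex per part gives a transversal of the parts inside `Ĩ ∩ V`, which
is independent in `G` since `G̃` has the same edges on `V`.
-/

open Finset Function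

theorem IsIndep.mono {α : Type*} {G : SimpleGraph α} {I S : Finset α} (hS : IsIndep G S)
    (hIS : I ⊆ S) : IsIndep G I :=
  fun u hu v hv => hS u (hIS hu) v (hIS hv)

theorem isIndep_addIsolated_iff {α : Type*} {G : SimpleGraph α} {k : ℕ}
    {J : Finset (α ⊕ Fin k)} : IsIndep (addIsolated G k) J ↔ IsIndep G J.toLeft := by
  constructor
  · intro hJ u hu v hv huv
    exact hJ _ (mem_toLeft.1 hu) _ (mem_toLeft.1 hv) ⟨u, v, rfl, rfl, huv⟩
  · rintro hJ _ hx _ hy ⟨u, v, rfl, rfl, huv⟩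
    exact hJ u (mem_toLeft.2 hx) v (mem_toLeft.2 hy) huv

theorem Finset.card_inter_insert_inr_image_inl {α β : Type*} [DecidableEq α] [DecidableEq β]
    (u : Finset (α ⊕ β)) (s : Finset α) (b : β) :
    #(u ∩ insert (.inr b) (s.image .inl)) = #(u.toLeft ∩ s) + #(u.toRight ∩ {b}) := by
  rw [← card_toLeft_add_card_toRight, toLeft_inter, toRight_inter]
  congr 3 <;> ext <;> simp

theorem Finset.exists_subset_card_inter_eq_one {α ι : Type*} [DecidableEq α] [Fintype ι]
    {S : Finset α} {Vs : ι → Finset α} (hdisj : Pairwise (Disjoint on Vs))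
    (hS : ∀ i, (S ∩ Vs i).Nonempty) : ∃ I ⊆ S, ∀ i, #(I ∩ Vs i) = 1 := by
  choose f hf using hS
  refine ⟨univ.image f, fun x hx => ?_, fun i => card_eq_one.2 ⟨f i, ?_⟩⟩
  · obtain ⟨i, -, rfl⟩ := mem_image.1 hx
    exact (mem_inter.1 (hf i)).1
  · ext x
    simp only [mem_inter, mem_image, mem_univ, true_and, mem_singleton]
    constructor
    · rintro ⟨⟨j, rfl⟩, hj⟩
      by_contra hji
      exact disjoint_left.1 (hdisj (ne_of_apply_ne f hji)) (mem_inter.1 (hf j)).2 hj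
    · rintro rfl
      exact ⟨⟨i, rfl⟩, (mem_inter.1 (hf i)).2⟩

theorem reduction_PIS1_to_PIS2_general {α : Type*} [DecidableEq α]
    (G : SimpleGraph α) (k : ℕ)
    (Vs : Fin k → Finset α)
    (hpart : ∀ x : α, ∃! i, x ∈ Vs i) :
    (∃ I : Finset α, IsIndep G I ∧ ∀ i, (I ∩ Vs i).card = 1) ↔
      (∃ J : Finset (α ⊕ Fin k), IsIndep (addIsolated G k) J ∧
        ∀ i, (J ∩ insert (Sum.inr i) ((Vs i).image Sum.inl)).card = 2) := by
  simp only [isIndep_addIsolated_iff, card_inter_insert_inr_image_inl]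
  constructor
  · rintro ⟨I, hI, hI1⟩
    refine ⟨I.disjSum univ, by rwa [toLeft_disjSum], fun i => ?_⟩
    simp [hI1 i]
  · rintro ⟨J, hJ, hJ2⟩
    have hdisj : Pairwise (Disjoint on Vs) := fun i j hij =>
      disjoint_left.2 fun x hi hj => hij ((hpart x).unique hi hj)
    have hmeet : ∀ i, (J.toLeft ∩ Vs i).Nonempty := fun i => by
      have hright : #(J.toRight ∩ {i}) ≤ 1 :=
        (card_le_card inter_subset_right).trans_eq (card_singleton i)
      exact card_pos.1 (by linarith [hJ2 i])
    obtain ⟨I, hIJ, hI1⟩ := exists_subset_card_inter_eq_one hdisj hmeet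
    exact ⟨I, hJ.mono hIJ, hI1⟩

theorem reduction_PIS1_to_PIS2 {α : Type*} [Fintype α] [DecidableEq α]
    (G : SimpleGraph α) (k : ℕ) (hk : 1 ≤ k)
    (Vs : Fin k → Finset α)
    (hindep : ∀ i, IsIndep G (Vs i))
    (hcard : ∀ i j, (Vs i).card = (Vs j).card)
    (hpart : ∀ x : α, ∃! i, x ∈ Vs i) :
    (∃ I : Finset α, IsIndep G I ∧ ∀ i, (I ∩ Vs i).card = 1) ↔
      (∃ J : Finset (α ⊕ Fin k), IsIndep (addIsolated G k) J ∧
        ∀ i, (J ∩ insert (Sum.inr i) ((Vs i).image Sum.inl)).card = 2) :=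
  reduction_PIS1_to_PIS2_general G k Vs hpart
end

section
/- Let G be a finite simple graph with vertex set V and let k ≥ 1 and p ≥ 1 be integers. Let H be the simple graph whose vertex set is the disjoint union of V × {1,…,k} and {1,…,k} × {1,…,p−1}, in which two vertices (u,i) and (v,j) of V × {1,…,k} are adjacent if and only if i ≠ j and either u = v or u and v are adjacent in G, and all vertices of {1,…,k} × {1,…,p−1} are isolated. For each i ∈ {1,…,k} set Wᵢ := (V × {i}) ∪ ({i} × {1,…,p−1}). Then G has an independent set of cardinality k if and only if H has an independent set Ĩ with |Ĩ ∩ Wᵢ| = p for every i ∈ {1,…,k}. -/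
/-- The graph `H` on the disjoint union of `V × {1,…,k}` and `{1,…,k} × {1,…,p-1}`:
two vertices `(u,i)` and `(v,j)` of `V × {1,…,k}` are adjacent iff `i ≠ j` and either
`u = v` or `u` and `v` are adjacent in `G`; all vertices of `{1,…,k} × {1,…,p-1}`
are isolated. -/
def composedGraph {α : Type*} (G : SimpleGraph α) (k p : ℕ) :
    SimpleGraph ((α × Fin k) ⊕ (Fin k × Fin (p - 1))) where
  Adj x y := ∃ u i v j, x = Sum.inl (u, i) ∧ y = Sum.inl (v, j) ∧
    i ≠ j ∧ (u = v ∨ G.Adj u v)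
  symm := by
    constructor
    rintro x y ⟨u, i, v, j, rfl, rfl, hij, h⟩
    refine ⟨v, j, u, i, rfl, rfl, hij.symm, ?_⟩
    rcases h with h | h
    · exact Or.inl h.symm
    · exact Or.inr (G.symm.symm _ _ h)
  loopless := by
    constructor
    rintro x ⟨u, i, v, j, rfl, h, hij, _⟩
    obtain ⟨h1, h2⟩ := Prod.mk.injEq .. ▸ Sum.inl.inj h
    exact hij h2

open Finset

theorem exists_isIndep_card_eq_iff {α : Type*} [DecidableEq α] (G : SimpleGraph α) (k : ℕ) :
    (∃ I : Finset α, IsIndep G I ∧ #I = k) ↔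
      ∃ f : Fin k → α, Function.Injective f ∧ ∀ i j, ¬ G.Adj (f i) (f j) := by
  constructor
  · rintro ⟨I, hI, rfl⟩
    let e := I.equivFin.symm
    exact ⟨fun i => e i, Subtype.val_injective.comp e.injective,
      fun i j => hI _ (e i).2 _ (e j).2⟩
  · rintro ⟨f, hf, hindep⟩
    refine ⟨univ.image f, ?_, by rw [card_image_of_injective _ hf, card_fin]⟩
    simp only [IsIndep, mem_image, mem_univ, true_and, forall_exists_index]
    rintro _ i rfl _ j rfl
    exact hindep i j

theorem card_inter_image_univ {β γ : Type*} [Fintype β] [DecidableEq γ] {f : β → γ}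
    (hf : Function.Injective f) (s : Finset γ) :
    #(s ∩ univ.image f) = #{b | f b ∈ s} := by
  rw [inter_comm, ← filter_mem_eq_inter, filter_image, card_image_of_injective _ hf]

namespace composedGraph

variable {α : Type*} (G : SimpleGraph α) {k p : ℕ}

variable (α p) in
/-- The set `Wᵢ` of the paper. -/
def block [Fintype α] [DecidableEq α] (i : Fin k) :
    Finset ((α × Fin k) ⊕ (Fin k × Fin (p - 1))) :=
  (univ.image fun u : α => Sum.inl (u, i)) ∪ (univ.image fun t : Fin (p - 1) => Sum.inr (i, t))

variable (p) in
def transversal [DecidableEq α] (f : Fin k → α) :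
    Finset ((α × Fin k) ⊕ (Fin k × Fin (p - 1))) :=
  univ.image (fun i => .inl (f i, i)) ∪ univ.image .inr

theorem adj_inl_inl {u v : α} {i j : Fin k} :
    (composedGraph G k p).Adj (.inl (u, i)) (.inl (v, j)) ↔ i ≠ j ∧ (u = v ∨ G.Adj u v) := by
  simp [composedGraph]

theorem not_adj_inr (x : (α × Fin k) ⊕ (Fin k × Fin (p - 1))) (y : Fin k × Fin (p - 1)) :
    ¬ (composedGraph G k p).Adj x (.inr y) := by
  simp [composedGraph]

theorem card_inter_block [Fintype α] [DecidableEq α]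
    (J : Finset ((α × Fin k) ⊕ (Fin k × Fin (p - 1)))) (i : Fin k) :
    #(J ∩ block α p i) = #{u | .inl (u, i) ∈ J} + #{t | .inr (i, t) ∈ J} := by
  rw [block, inter_union_distrib_left, card_union_of_disjoint, card_inter_image_univ,
    card_inter_image_univ]
  · intro a b h; simpa using h
  · intro a b h; simpa using h
  · exact disjoint_left.2 (by simp)

theorem card_transversal_inter_block [Fintype α] [DecidableEq α] (f : Fin k → α) (hp : 1 ≤ p)
    (i : Fin k) : #(transversal p f ∩ block α p i) = p := by
  have hrow : ({u | .inl (u, i) ∈ transversal p f} : Finset α) = {f i} := by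
    ext; simp [transversal, eq_comm]
  have hpad : ({t | .inr (i, t) ∈ transversal p f} : Finset (Fin (p - 1))) = univ := by
    ext; simp [transversal]
  rw [card_inter_block, hrow, hpad, card_singleton, card_univ, Fintype.card_fin]
  omega

theorem isIndep_transversal [DecidableEq α] {f : Fin k → α} (hf : Function.Injective f)
    (hindep : ∀ i j, ¬ G.Adj (f i) (f j)) :
    IsIndep (composedGraph G k p) (transversal p f) := by
  simp only [IsIndep, transversal, mem_union, mem_image, mem_univ, true_and]
  rintro x (⟨a, rfl⟩ | ⟨a, rfl⟩) y (⟨b, rfl⟩ | ⟨b, rfl⟩) hadj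
  · obtain ⟨hab, heq | hadj⟩ := (adj_inl_inl G).1 hadj
    exacts [hab (hf heq), hindep a b hadj]
  all_goals first
    | exact not_adj_inr G _ _ hadj
    | exact not_adj_inr G _ _ hadj.symm

theorem exists_inl_mem_of_card_inter_block [Fintype α] [DecidableEq α]
    {J : Finset ((α × Fin k) ⊕ (Fin k × Fin (p - 1)))} (hp : 1 ≤ p) {i : Fin k}
    (hcard : #(J ∩ block α p i) = p) : ∃ u, Sum.inl (u, i) ∈ J := by
  have hpad : #{t : Fin (p - 1) | .inr (i, t) ∈ J} ≤ p - 1 :=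
    (card_filter_le _ _).trans (by simp)
  obtain ⟨u, hu⟩ : ({u | .inl (u, i) ∈ J} : Finset α).Nonempty := by
    rw [← card_pos]
    have hsplit := card_inter_block J i
    omega
  exact ⟨u, (mem_filter.1 hu).2⟩

theorem exists_injective_of_isIndep [Fintype α] [DecidableEq α]
    {J : Finset ((α × Fin k) ⊕ (Fin k × Fin (p - 1)))} (hp : 1 ≤ p)
    (hJ : IsIndep (composedGraph G k p) J) (hcard : ∀ i, #(J ∩ block α p i) = p) :
    ∃ f : Fin k → α, Function.Injective f ∧ ∀ i j, ¬ G.Adj (f i) (f j) := by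
  choose f hf using fun i => exists_inl_mem_of_card_inter_block hp (hcard i)
  refine ⟨f, fun i j heq => ?_, fun i j hadj => ?_⟩
  · by_contra hij
    exact hJ _ (hf i) _ (hf j) ((adj_inl_inl G).2 ⟨hij, .inl heq⟩)
  · have hij : i ≠ j := by rintro rfl; exact G.loopless.irrefl _ hadj
    exact hJ _ (hf i) _ (hf j) ((adj_inl_inl G).2 ⟨hij, .inr hadj⟩)

end composedGraph

theorem reduction_IS_to_PISp_general {α : Type*} [Fintype α] [DecidableEq α]
    (G : SimpleGraph α) (k p : ℕ) (hp : 1 ≤ p) :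
    (∃ I : Finset α, IsIndep G I ∧ I.card = k) ↔
      (∃ J : Finset ((α × Fin k) ⊕ (Fin k × Fin (p - 1))),
        IsIndep (composedGraph G k p) J ∧
        ∀ i : Fin k,
          (J ∩ ((Finset.univ.image fun u : α => Sum.inl (u, i)) ∪
            (Finset.univ.image fun t : Fin (p - 1) => Sum.inr (i, t)))).card = p) := by
  rw [exists_isIndep_card_eq_iff]
  constructor
  · rintro ⟨f, hf, hindep⟩
    exact ⟨composedGraph.transversal p f, composedGraph.isIndep_transversal G hf hindep,
      composedGraph.card_transversal_inter_block f hp⟩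
  · rintro ⟨J, hJ, hcard⟩
    exact composedGraph.exists_injective_of_isIndep G hp hJ hcard

theorem reduction_IS_to_PISp {α : Type*} [Fintype α] [DecidableEq α]
    (G : SimpleGraph α) (k p : ℕ) (hk : 1 ≤ k) (hp : 1 ≤ p) :
    (∃ I : Finset α, IsIndep G I ∧ I.card = k) ↔
      (∃ J : Finset ((α × Fin k) ⊕ (Fin k × Fin (p - 1))),
        IsIndep (composedGraph G k p) J ∧
        ∀ i : Fin k,
          (J ∩ ((Finset.univ.image fun u : α => Sum.inl (u, i)) ∪
            (Finset.univ.image fun t : Fin (p - 1) => Sum.inr (i, t)))).card = p) :=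
  reduction_IS_to_PISp_general G k p hp
end

section
/- Let n ≥ 1 be an integer and let v¹, v², …, vⁿ be n pairwise distinct labels; set X := {v¹,…,vⁿ}. Let R := {{v¹,…,v^j} : 1 ≤ j ≤ n} ∪ {{v^j} : 1 ≤ j ≤ n} be the hierarchy of the caterpillar tree Rₙ[v¹,…,vⁿ] and let R̃ := {{v^j,…,vⁿ} : 1 ≤ j ≤ n} ∪ {{v^j} : 1 ≤ j ≤ n} be the hierarchy of the reversed caterpillar Rₙ[vⁿ,…,v¹]. Then for every nonempty subset L ⊆ X, there exists a hierarchy F on L with R|L ⊆ F and R̃|L ⊆ F (i.e., there exists a tree on L compatible with both caterpillars) if and only if |L| ≤ 2. -/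
/-- `F` is a hierarchy on `L`: a family of nonempty subsets of `L` containing `L`
itself and all singletons, and laminar (any two members are disjoint or nested). -/
def IsHierarchy {α : Type*} (L : Set α) (F : Set (Set α)) : Prop :=
  (∀ A ∈ F, A ⊆ L ∧ A.Nonempty) ∧ L ∈ F ∧ (∀ x ∈ L, {x} ∈ F) ∧
    ∀ A ∈ F, ∀ B ∈ F, A ∩ B = ∅ ∨ A ⊆ B ∨ B ⊆ A

/-- The restriction `H|L := {A ∩ L : A ∈ H, A ∩ L ≠ ∅}` of a family of sets `H`
to a set `L`. -/
def restrictH {α : Type*} (H : Set (Set α)) (L : Set α) : Set (Set α) :=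
  {S | ∃ A ∈ H, S = A ∩ L ∧ S.Nonempty}

/-!
If `L` contains `vᵖ, v^q, vʳ` with `p < q < r`, the restricted caterpillars contain the prefix
`{v¹, …, v^q} ∩ L` and the suffix `{v^q, …, vⁿ} ∩ L`; these share `v^q` while `vᵖ` lies only in
the first and `vʳ` only in the second, so no laminar family contains both. When `|L| ≤ 2` any two
nonempty subsets of `L` are disjoint or nested, so all of them form a common refinement.
-/

open Set

lemma Set.exists_lt_lt_of_two_lt_encard {ι : Type*} [LinearOrder ι] {s : Set ι}
    (hs : 2 < s.encard) : ∃ p ∈ s, ∃ q ∈ s, ∃ r ∈ s, p < q ∧ q < r := by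
  obtain ⟨t, hts, ht⟩ := exists_subset_encard_eq (Order.add_one_le_of_lt hs)
  have htfin : t.Finite := finite_of_encard_eq_coe ht
  have hcard : htfin.toFinset.card = 3 := by
    rw [htfin.encard_eq_coe_toFinset_card] at ht
    exact_mod_cast ht
  set f := htfin.toFinset.orderEmbOfFin hcard
  have hf (i : Fin 3) : f i ∈ s := hts (htfin.mem_toFinset.1 (Finset.orderEmbOfFin_mem _ _ i))
  exact ⟨f 0, hf 0, f 1, hf 1, f 2, hf 2, f.strictMono (by decide), f.strictMono (by decide)⟩

section Caterpillar

variable {α ι : Type*} [LinearOrder ι] {v : ι → α} {L : Set α} {F : Set (Set α)}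

lemma IsHierarchy.false_of_mem_image_Iic_of_mem_image_Ici (hv : Function.Injective v)
    (hF : IsHierarchy L F) {p q r : ι} (hpq : p < q) (hqr : q < r)
    (hp : v p ∈ L) (hq : v q ∈ L) (hr : v r ∈ L)
    (hpre : v '' Iic q ∩ L ∈ F) (hsuf : v '' Ici q ∩ L ∈ F) : False := by
  have hqpre : v q ∈ v '' Iic q ∩ L := ⟨mem_image_of_mem v self_mem_Iic, hq⟩
  have hqsuf : v q ∈ v '' Ici q ∩ L := ⟨mem_image_of_mem v self_mem_Ici, hq⟩
  rcases hF.2.2.2 _ hpre _ hsuf with hdisj | hsub | hsub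
  · exact (eq_empty_iff_forall_notMem.1 hdisj) (v q) ⟨hqpre, hqsuf⟩
  · have hp_suf := (hsub ⟨mem_image_of_mem v hpq.le, hp⟩).1
    rw [hv.mem_set_image] at hp_suf
    exact hpq.not_ge hp_suf
  · have hr_pre := (hsub ⟨mem_image_of_mem v hqr.le, hr⟩).1
    rw [hv.mem_set_image] at hr_pre
    exact hqr.not_ge hr_pre

lemma IsHierarchy.encard_le_two_of_forall_mem_image_Iic_Ici (hv : Function.Injective v)
    (hL : L ⊆ range v) (hF : IsHierarchy L F)
    (hpre : ∀ j, v j ∈ L → v '' Iic j ∩ L ∈ F) (hsuf : ∀ j, v j ∈ L → v '' Ici j ∩ L ∈ F) :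
    L.encard ≤ 2 := by
  by_contra! hL3
  rw [← image_preimage_eq_of_subset hL, hv.encard_image] at hL3
  obtain ⟨p, hp, q, hq, r, hr, hpq, hqr⟩ := exists_lt_lt_of_two_lt_encard hL3
  exact hF.false_of_mem_image_Iic_of_mem_image_Ici hv hpq hqr hp hq hr (hpre q hq) (hsuf q hq)

end Caterpillar

lemma isHierarchy_setOf_subset_nonempty {α : Type*} {L : Set α} (hL : L.Nonempty)
    (hL2 : L.encard ≤ 2) : IsHierarchy L {A | A ⊆ L ∧ A.Nonempty} := by
  refine ⟨fun A hA => hA, ⟨Subset.rfl, hL⟩, fun x hx => ⟨singleton_subset_iff.2 hx, ⟨x, rfl⟩⟩, ?_⟩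
  rintro A ⟨hAL, -⟩ B ⟨hBL, -⟩
  by_contra! h
  obtain ⟨⟨x, hxA, hxB⟩, hAB, hBA⟩ := h
  obtain ⟨a, haA, haB⟩ := not_subset.1 hAB
  obtain ⟨b, hbB, hbA⟩ := not_subset.1 hBA
  have hsub : ({a, b, x} : Set α) ⊆ L := by
    rintro y (rfl | rfl | rfl)
    exacts [hAL haA, hBL hbB, hAL hxA]
  have hthree : ({a, b, x} : Set α).encard = 3 :=
    encard_eq_three.2 ⟨a, b, x, by grind, by grind, by grind, rfl⟩
  have := hthree ▸ encard_le_encard hsub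
  exact absurd (this.trans hL2) (by decide)

lemma restrictH_subset_setOf_subset_nonempty {α : Type*} (H : Set (Set α)) (L : Set α) :
    restrictH H L ⊆ {A | A ⊆ L ∧ A.Nonempty} := by
  rintro S ⟨A, -, rfl, hS⟩
  exact ⟨inter_subset_right, hS⟩

theorem caterpillar_compatibility_general {α : Type*} (n : ℕ)
    (v : Fin n → α) (hv : Function.Injective v) :
    -- `X := {v¹, …, vⁿ}`
    let X : Set α := Set.range v
    -- the hierarchy of the caterpillar tree `Rₙ[v¹, …, vⁿ]`
    let R : Set (Set α) :=
      {S | ∃ j : Fin n, S = v '' {i | i ≤ j}} ∪ {S | ∃ j : Fin n, S = {v j}}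
    -- the hierarchy of the reversed caterpillar tree `Rₙ[vⁿ, …, v¹]`
    let Rt : Set (Set α) :=
      {S | ∃ j : Fin n, S = v '' {i | j ≤ i}} ∪ {S | ∃ j : Fin n, S = {v j}}
    ∀ L : Set α, L ⊆ X → L.Nonempty →
      ((∃ F : Set (Set α), IsHierarchy L F ∧ restrictH R L ⊆ F ∧ restrictH Rt L ⊆ F) ↔
        L.ncard ≤ 2) := by
  intro X R Rt L hL hLne
  have hcard : L.ncard ≤ 2 ↔ L.encard ≤ 2 := by
    rw [← ((finite_range v).subset hL).cast_ncard_eq]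
    norm_cast
  rw [hcard]
  constructor
  · rintro ⟨F, hF, hRF, hRtF⟩
    refine hF.encard_le_two_of_forall_mem_image_Iic_Ici hv hL (fun j hj => ?_) (fun j hj => ?_)
    · exact hRF ⟨_, Or.inl ⟨j, rfl⟩, rfl, ⟨v j, mem_image_of_mem v self_mem_Iic, hj⟩⟩
    · exact hRtF ⟨_, Or.inl ⟨j, rfl⟩, rfl, ⟨v j, mem_image_of_mem v self_mem_Ici, hj⟩⟩
  · intro hL2
    exact ⟨_, isHierarchy_setOf_subset_nonempty hLne hL2,
      restrictH_subset_setOf_subset_nonempty R L, restrictH_subset_setOf_subset_nonempty Rt L⟩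

theorem caterpillar_compatibility {α : Type*} (n : ℕ) (hn : 1 ≤ n)
    (v : Fin n → α) (hv : Function.Injective v) :
    -- `X := {v¹, …, vⁿ}`
    let X : Set α := Set.range v
    -- the hierarchy of the caterpillar tree `Rₙ[v¹, …, vⁿ]`
    let R : Set (Set α) :=
      {S | ∃ j : Fin n, S = v '' {i | i ≤ j}} ∪ {S | ∃ j : Fin n, S = {v j}}
    -- the hierarchy of the reversed caterpillar tree `Rₙ[vⁿ, …, v¹]`
    let Rt : Set (Set α) :=
      {S | ∃ j : Fin n, S = v '' {i | j ≤ i}} ∪ {S | ∃ j : Fin n, S = {v j}}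
    ∀ L : Set α, L ⊆ X → L.Nonempty →
      ((∃ F : Set (Set α), IsHierarchy L F ∧ restrictH R L ⊆ F ∧ restrictH Rt L ⊆ F) ↔
        L.ncard ≤ 2) :=
  caterpillar_compatibility_general n v hv
end

section
/- Let k ≥ 3 be an integer and let V₁, V₂, …, V_k be pairwise disjoint finite sets, each of cardinality at least 3, with union V. For each i ∈ {1,…,k} let Bᵢ be a binary hierarchy on Vᵢ. Set H_C := {V} ∪ B₁ ∪ ⋯ ∪ B_k (the hierarchy of the tree C = ⟨B₁,…,B_k⟩), and for each pair of distinct elements a, b ∈ V set H_{a,b} := {V, {a}, {b}} ∪ ⋃_{i=1}^{k} {A ∖ {a,b} : A ∈ Bᵢ, A ∖ {a,b} ≠ ∅} (the hierarchy of the tree C_{a,b} obtained from C by removing the leaves a and b and re-grafting both as children of the root). Then for every subset L ⊆ V the following two statements are equivalent: (i) |L| = k and the restrictions H_C|L and H_{a,b}|L, over all pairs of distinct a, b ∈ V, are all equal; (ii) |L ∩ Vᵢ| = 1 for every i ∈ {1,…,k}. Moreover, when these hold, the common restriction equals {L} ∪ {{x} : x ∈ L}, the hierarchy of the height-one star tree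 on L. -/
/-!
A pair `p ≠ q` in `L` separates the two trees: in `C_{p,q}` the only cluster containing both
`p` and `q` is the root, so agreement forces every cluster of `C` that meets `L` in two points to
contain all of `L`. A binary tree has no such restriction on three or more leaves: binary
hierarchies are the maximal laminar families (a laminar family of nonempty subsets of an
`n`-set has at most `2n - 1` members), and the union of the two largest clusters that avoid `L`
but contain two given points of `L` would extend the hierarchy. Hence `L ⊄ Vᵢ`, so
`|L ∩ Vᵢ| ≤ 1` (as `Vᵢ` is a cluster), and `|L| = k` forces equality. Conversely, on a
transversal every cluster other than the root meets `L` in at most one point, so both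
restrictions are the star.
-/

open Set Function

section

variable {α : Type*}

def IsLaminar (F : Set (Set α)) : Prop :=
  ∀ A ∈ F, ∀ B ∈ F, A ∩ B = ∅ ∨ A ⊆ B ∨ B ⊆ A

lemma two_le_ncard_of_sUnion_eq {G : Set (Set α)} {M : Set α} (hG : G.Finite)
    (hM : M.Nonempty) (hGM : ∀ A ∈ G, A ⊂ M) (hU : ⋃₀ G = M) : 2 ≤ G.ncard := by
  by_contra! hlt
  rcases (ncard_le_one_iff_eq hG).1 (by omega) with rfl | ⟨A, rfl⟩
  · simp [← hU] at hM
  · exact (hGM A rfl).ne (by simpa using hU)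

lemma sUnion_setOf_maximal {F : Set (Set α)} (hF : F.Finite) :
    ⋃₀ {A | Maximal (· ∈ F) A} = ⋃₀ F := by
  refine (sUnion_mono fun A hA => hA.prop).antisymm (sUnion_subset fun A hA => ?_)
  obtain ⟨M, hAM, hM⟩ := hF.exists_le_maximal hA
  exact hAM.trans (subset_sUnion_of_mem hM)

namespace IsLaminar

variable {F : Set (Set α)}

lemma mono {G : Set (Set α)} (hF : IsLaminar F) (hGF : G ⊆ F) : IsLaminar G :=
  fun A hA B hB => hF A (hGF hA) B (hGF hB)

lemma subset_or_subset_of_mem (hF : IsLaminar F) {A B : Set α} (hA : A ∈ F) (hB : B ∈ F)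
    {x : α} (hxA : x ∈ A) (hxB : x ∈ B) : A ⊆ B ∨ B ⊆ A :=
  (hF A hA B hB).resolve_left fun h => (h ▸ mem_inter hxA hxB : x ∈ (∅ : Set α))

lemma exists_greatest_of_forall_mem (hF : IsLaminar F) (hfin : F.Finite) (hne : F.Nonempty)
    {x : α} (hx : ∀ A ∈ F, x ∈ A) : ∃ C ∈ F, ∀ A ∈ F, A ⊆ C := by
  obtain ⟨C, hC⟩ := hfin.exists_maximal hne
  refine ⟨C, hC.prop, fun A hA => ?_⟩
  rcases hF.subset_or_subset_of_mem hA hC.prop (hx A hA) (hx C hC.prop) with h | h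
  exacts [h, (hC.eq_of_ge hA h).le]

lemma subset_insert_of_maximal (hF : IsLaminar F) {M : Set α} (hM : Maximal (· ∈ F) M) :
    F ⊆ insert M ({A ∈ F | A ⊂ M} ∪ {A ∈ F | A ∩ M = ∅}) := by
  intro A hA
  rcases hF A hA M hM.prop with h | h | h
  · exact Or.inr (Or.inr ⟨hA, h⟩)
  · rcases h.eq_or_ssubset with rfl | h
    exacts [Or.inl rfl, Or.inr (Or.inl ⟨hA, h⟩)]
  · exact Or.inl (hM.eq_of_ge hA h)

lemma setOf_maximal_subset_insert (hF : IsLaminar F) {M : Set α} (hM : Maximal (· ∈ F) M) :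
    {A | Maximal (· ∈ F) A} ⊆ insert M {A | Maximal (· ∈ {B ∈ F | B ∩ M = ∅}) A} := by
  intro A hA
  rcases hF A hA.prop M hM.prop with h | h | h
  · exact Or.inr (hA.mono (fun B hB => hB.1) ⟨hA.prop, h⟩)
  · exact Or.inl (hA.eq_of_ge hM.prop h).symm
  · exact Or.inl (hM.eq_of_ge hA.prop h)

/-- Either the members below `M` leave a point of `M` uncovered, or covering `M` takes at least
two maximal ones. -/
lemma ncard_add_two_le_of_forall_ssubset {M : Set α} (hF : F.Finite) (hM : M.Finite)
    (hMne : M.Nonempty) (hFM : ∀ A ∈ F, A ⊂ M)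
    (hcount : F.ncard + {A | Maximal (· ∈ F) A}.ncard ≤ 2 * (⋃₀ F).ncard) :
    F.ncard + 2 ≤ 2 * M.ncard := by
  have hUM : ⋃₀ F ⊆ M := sUnion_subset fun A hA => (hFM A hA).subset
  rcases hUM.eq_or_ssubset with hU | hU
  · have := two_le_ncard_of_sUnion_eq (hF.subset fun A hA => hA.prop) hMne
      (fun A hA => hFM A hA.prop) ((sUnion_setOf_maximal hF).trans hU)
    rw [hU] at hcount
    omega
  · have := ncard_lt_ncard hU hM
    omega

theorem ncard_add_ncard_maximal_le (hF : IsLaminar F) (hfin : F.Finite)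
    (hne : ∀ A ∈ F, A.Nonempty ∧ A.Finite) :
    F.ncard + {A | Maximal (· ∈ F) A}.ncard ≤ 2 * (⋃₀ F).ncard := by
  induction h : F.ncard using Nat.strong_induction_on generalizing F with
  | _ n ih =>
  subst h
  rcases F.eq_empty_or_nonempty with rfl | hFne
  · simp
  obtain ⟨M, hM⟩ := hfin.exists_maximal hFne
  set F₁ := {A ∈ F | A ⊂ M}
  set F₂ := {A ∈ F | A ∩ M = ∅}
  have hsub₁ : F₁ ⊆ F := sep_subset _ _
  have hsub₂ : F₂ ⊆ F := sep_subset _ _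
  have hM₁ : M ∉ F₁ := fun h => h.2.ne rfl
  have hM₂ : M ∉ F₂ := fun h => (hne M hM.prop).1.ne_empty (by simpa using h.2)
  have ih₁ := ih _
    (ncard_lt_ncard (ssubset_of_subset_not_subset hsub₁ fun h => hM₁ (h hM.prop)) hfin)
    (hF.mono hsub₁) (hfin.subset hsub₁) (fun A hA => hne A hA.1) rfl
  have ih₂ := ih _
    (ncard_lt_ncard (ssubset_of_subset_not_subset hsub₂ fun h => hM₂ (h hM.prop)) hfin)
    (hF.mono hsub₂) (hfin.subset hsub₂) (fun A hA => hne A hA.1) rfl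
  have hbelow := ncard_add_two_le_of_forall_ssubset (hfin.subset hsub₁) (hne M hM.prop).2
    (hne M hM.prop).1 (fun A hA => hA.2) ih₁
  have hcardF : F.ncard ≤ F₁.ncard + F₂.ncard + 1 :=
    (ncard_le_ncard (hF.subset_insert_of_maximal hM)
      ((hfin.subset hsub₁ |>.union (hfin.subset hsub₂)).insert M)).trans
      ((ncard_insert_le _ _).trans (Nat.succ_le_succ (ncard_union_le F₁ F₂)))
  have hcardMax : {A | Maximal (· ∈ F) A}.ncard ≤ {A | Maximal (· ∈ F₂) A}.ncard + 1 :=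
    (ncard_le_ncard (hF.setOf_maximal_subset_insert hM)
      (((hfin.subset hsub₂).subset fun A hA => hA.prop).insert M)).trans (ncard_insert_le _ _)
  have hdisj : Disjoint M (⋃₀ F₂) :=
    disjoint_sUnion_right.2 fun A hA => disjoint_iff_inter_eq_empty.2 (inter_comm M A ▸ hA.2)
  have hUfin : (⋃₀ F).Finite := hfin.sUnion fun A hA => (hne A hA).2
  have hcardU : M.ncard + (⋃₀ F₂).ncard ≤ (⋃₀ F).ncard := by
    rw [← ncard_union_eq hdisj (hne M hM.prop).2 (hUfin.subset (sUnion_mono hsub₂))]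
    exact ncard_le_ncard
      (union_subset (subset_sUnion_of_mem hM.prop) (sUnion_mono hsub₂)) hUfin
  omega

theorem ncard_le (hF : IsLaminar F) {U : Set α} (hU : U.Finite)
    (hFU : ∀ A ∈ F, A.Nonempty ∧ A ⊆ U) : F.ncard ≤ 2 * U.ncard - 1 := by
  rcases F.eq_empty_or_nonempty with rfl | hFne
  · simp
  have hfin : F.Finite := hU.finite_subsets.subset fun A hA => (hFU A hA).2
  obtain ⟨M, hM⟩ := hfin.exists_maximal hFne
  have hmax : 1 ≤ {A | Maximal (· ∈ F) A}.ncard :=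
    (ncard_pos (hfin.subset fun A hA => hA.prop)).2 ⟨M, hM⟩
  have hcount := hF.ncard_add_ncard_maximal_le hfin
    fun A hA => ⟨(hFU A hA).1, hU.subset (hFU A hA).2⟩
  have := ncard_le_ncard (sUnion_subset fun A hA => (hFU A hA).2) hU
  omega

lemma insert (hF : IsLaminar F) {S : Set α} (hS : ∀ A ∈ F, A ∩ S = ∅ ∨ A ⊆ S ∨ S ⊆ A) :
    IsLaminar (insert S F) := by
  rintro A (rfl | hA) B (rfl | hB)
  · exact Or.inr (Or.inl subset_rfl)
  · rcases hS B hB with h | h | h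
    exacts [Or.inl (inter_comm A B ▸ h), Or.inr (Or.inr h), Or.inr (Or.inl h)]
  · exact hS A hA
  · exact hF A hA B hB

end IsLaminar

namespace IsHierarchy

variable {X : Set α} {H : Set (Set α)}

lemma isLaminar (hH : IsHierarchy X H) : IsLaminar H := hH.2.2.2

lemma finite (hH : IsHierarchy X H) (hX : X.Finite) : H.Finite :=
  hX.finite_subsets.subset fun A hA => (hH.1 A hA).1

/-- A binary hierarchy already attains the bound of `IsLaminar.ncard_le`. -/
lemma mem_of_isLaminar_insert (hH : IsHierarchy X H) (hX : X.Finite)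
    (hcard : H.ncard = 2 * X.ncard - 1) {S : Set α} (hS : S.Nonempty) (hSX : S ⊆ X)
    (hlam : IsLaminar (insert S H)) : S ∈ H := by
  by_contra hSH
  have hXpos : 0 < X.ncard := (ncard_pos hX).2 (hH.1 X hH.2.1).2
  have hle := hlam.ncard_le hX <| by
    rintro A (rfl | hA)
    exacts [⟨hS, hSX⟩, ⟨(hH.1 A hA).2, (hH.1 A hA).1⟩]
  rw [ncard_insert_of_notMem hSH (hH.finite hX)] at hle
  omega

lemma exists_greatest_mem_not_superset (hH : IsHierarchy X H) (hX : X.Finite) {L : Set α}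
    (hLX : L ⊆ X) {x y : α} (hx : x ∈ L) (hy : y ∈ L) (hxy : x ≠ y) :
    ∃ C ∈ H, x ∈ C ∧ ¬ L ⊆ C ∧ ∀ A ∈ H, x ∈ A → ¬ L ⊆ A → A ⊆ C := by
  have hxG : {x} ∈ {A ∈ H | x ∈ A ∧ ¬ L ⊆ A} :=
    ⟨hH.2.2.1 x (hLX hx), rfl, fun h => hxy (h hy).symm⟩
  obtain ⟨C, hC, hgreatest⟩ :=
    (hH.isLaminar.mono (sep_subset _ _)).exists_greatest_of_forall_mem
      ((hH.finite hX).subset (sep_subset _ _)) ⟨_, hxG⟩ fun A hA => hA.2.1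
  exact ⟨C, hC.1, hC.2.1, hC.2.2, fun A hA hxA hLA => hgreatest A ⟨hA, hxA, hLA⟩⟩

end IsHierarchy

lemma IsLaminar.subset_or_superset_union {F : Set (Set α)} (hF : IsLaminar F)
    {L Cx Cy : Set α} {x y : α} (hCx : Cx ∈ F) (hxCx : x ∈ Cx)
    (hgreatest : ∀ A ∈ F, x ∈ A → ¬ L ⊆ A → A ⊆ Cx)
    (hCy : Cy ∈ F) (hyCy : y ∈ Cy) (hLCy : ¬ L ⊆ Cy) (hyL : y ∈ L) {A : Set α} (hA : A ∈ F)
    (hACx : (A ∩ Cx).Nonempty) : A ⊆ Cx ∪ Cy ∨ Cx ∪ Cy ⊆ A := by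
  obtain ⟨u, huA, huCx⟩ := hACx
  rcases hF.subset_or_subset_of_mem hA hCx huA huCx with h | h
  · exact Or.inl (h.trans subset_union_left)
  by_cases hLA : L ⊆ A
  · refine Or.inr (union_subset h ?_)
    rcases hF.subset_or_subset_of_mem hCy hA hyCy (hLA hyL) with h' | h'
    exacts [h', absurd (hLA.trans h') hLCy]
  · exact Or.inl ((hgreatest A hA (h hxCx) hLA).trans subset_union_left)

theorem IsHierarchy.exists_mem_splitting {X : Set α} {H : Set (Set α)}
    (hH : IsHierarchy X H) (hX : X.Finite) (hcard : H.ncard = 2 * X.ncard - 1) {L : Set α}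
    (hLX : L ⊆ X) (hL : 3 ≤ L.ncard) : ∃ A ∈ H, ∃ p ∈ A ∩ L, ∃ q ∈ A ∩ L, p ≠ q ∧ ¬ L ⊆ A := by
  obtain ⟨x, y, z, hx, hy, hz, hxy, hxz, hyz⟩ := (two_lt_ncard_iff (hX.subset hLX)).1 hL
  obtain ⟨Cx, hCx, hxCx, hLCx, hgx⟩ := hH.exists_greatest_mem_not_superset hX hLX hx hy hxy
  obtain ⟨Cy, hCy, hyCy, hLCy, hgy⟩ :=
    hH.exists_greatest_mem_not_superset hX hLX hy hx hxy.symm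
  have hS : Cx ∪ Cy ∈ H := by
    refine hH.mem_of_isLaminar_insert hX hcard ⟨x, Or.inl hxCx⟩
      (union_subset (hH.1 Cx hCx).1 (hH.1 Cy hCy).1) (hH.isLaminar.insert fun A hA => ?_)
    by_cases hACx : (A ∩ Cx).Nonempty
    · exact Or.inr
        (hH.isLaminar.subset_or_superset_union hCx hxCx hgx hCy hyCy hLCy hy hA hACx)
    by_cases hACy : (A ∩ Cy).Nonempty
    · rw [union_comm]
      exact Or.inr
        (hH.isLaminar.subset_or_superset_union hCy hyCy hgy hCx hxCx hLCx hx hA hACy)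
    rw [not_nonempty_iff_eq_empty] at hACx hACy
    exact Or.inl (by rw [inter_union_distrib_left, hACx, hACy, union_empty])
  by_cases hLS : L ⊆ Cx ∪ Cy
  · rcases hLS hz with hzC | hzC
    · exact ⟨Cx, hCx, x, ⟨hxCx, hx⟩, z, ⟨hzC, hz⟩, hxz, hLCx⟩
    · exact ⟨Cy, hCy, y, ⟨hyCy, hy⟩, z, ⟨hzC, hz⟩, hyz, hLCy⟩
  · exact ⟨_, hS, x, ⟨Or.inl hxCx, hx⟩, y, ⟨Or.inr hyCy, hy⟩, hxy, hLS⟩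

def starHierarchy (L : Set α) : Set (Set α) := {L} ∪ {S | ∃ x ∈ L, S = {x}}

/-- `H_{a,b}`: the leaves `a`, `b` pruned from `⟨B₁, …, B_k⟩` and regrafted as children of
the root `V`. -/
def regraftHierarchy {ι : Type*} (V : Set α) (Bs : ι → Set (Set α)) (a b : α) :
    Set (Set α) :=
  {V, {a}, {b}} ∪ ⋃ i, {S | ∃ A ∈ Bs i, S = A \ {a, b} ∧ S.Nonempty}

lemma restrictH_eq_starHierarchy {H : Set (Set α)} {L : Set α} (hL : L.Nonempty)
    (htop : ∃ A ∈ H, L ⊆ A) (hsingle : ∀ x ∈ L, ∃ A ∈ H, A ∩ L = {x})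
    (hsmall : ∀ A ∈ H, L ⊆ A ∨ (A ∩ L).Subsingleton) : restrictH H L = starHierarchy L := by
  ext S
  constructor
  · rintro ⟨A, hA, rfl, x, hx⟩
    rcases hsmall A hA with h | h
    exacts [Or.inl (inter_eq_right.2 h), Or.inr ⟨x, hx.2, h.eq_singleton_of_mem hx⟩]
  · rintro (rfl | ⟨x, hx, rfl⟩)
    · obtain ⟨A, hA, hLA⟩ := htop
      exact ⟨A, hA, (inter_eq_right.2 hLA).symm, hL⟩
    · obtain ⟨A, hA, hAx⟩ := hsingle x hx
      exact ⟨A, hA, hAx.symm, singleton_nonempty x⟩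

/-- In `H_{p,q}` the only cluster containing both `p` and `q` is the root. -/
lemma subset_of_restrictH_regraftHierarchy_eq {ι : Type*} {V : Set α}
    {Bs : ι → Set (Set α)} {H : Set (Set α)} {L : Set α} (hL : L ⊆ V) {p q : α} (hpq : p ≠ q)
    (heq : restrictH (regraftHierarchy V Bs p q) L = restrictH H L) {A : Set α} (hA : A ∈ H)
    (hp : p ∈ A ∩ L) (hq : q ∈ A ∩ L) : L ⊆ A := by
  obtain ⟨T, hT, hTA, -⟩ : A ∩ L ∈ restrictH (regraftHierarchy V Bs p q) L :=
    heq ▸ ⟨A, hA, rfl, p, hp⟩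
  rw [hTA] at hp hq
  rcases hT with (rfl | rfl | rfl) | hT
  · exact inter_eq_right.1 (hTA.trans (inter_eq_right.2 hL))
  · exact (hpq hq.1.symm).elim
  · exact (hpq hp.1).elim
  · obtain ⟨i, A', -, rfl, -⟩ := mem_iUnion.1 hT
    exact (hp.1.2 (Or.inl rfl)).elim

lemma ncard_eq_sum_ncard_inter {ι : Type*} [Fintype ι] {Vs : ι → Set α}
    (hfin : ∀ i, (Vs i).Finite) (hdisj : Pairwise (Disjoint on Vs)) {L : Set α}
    (hL : L ⊆ ⋃ i, Vs i) : L.ncard = ∑ i, (L ∩ Vs i).ncard := by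
  conv_lhs => rw [← inter_eq_left.2 hL, inter_iUnion]
  rw [ncard_iUnion_of_finite (fun i => (hfin i).inter_of_right L)
    (fun i j hij => (hdisj hij).mono inter_subset_right inter_subset_right),
    finsum_eq_sum_of_fintype]

lemma eq_one_of_sum_eq_card {ι : Type*} [Fintype ι] {f : ι → ℕ} (hf : ∀ i, f i ≤ 1)
    (hsum : ∑ i, f i = Fintype.card ι) (i : ι) : f i = 1 := by
  by_contra hi
  have hlt : ∑ j, f j < ∑ _j : ι, 1 :=
    Finset.sum_lt_sum (fun j _ => hf j) ⟨i, Finset.mem_univ i, by have := hf i; omega⟩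
  simp only [Finset.sum_const, Finset.card_univ, smul_eq_mul, mul_one] at hlt
  omega

section

variable {ι : Type*} {Vs : ι → Set α} {Bs : ι → Set (Set α)} {L : Set α}

lemma restrictH_eq_starHierarchy_of_subsingleton (hB : ∀ i, IsHierarchy (Vs i) (Bs i))
    (hL : L ⊆ ⋃ i, Vs i) (hLne : L.Nonempty) (hsub : ∀ i, (L ∩ Vs i).Subsingleton) :
    restrictH ({⋃ i, Vs i} ∪ ⋃ i, Bs i) L = starHierarchy L := by
  refine restrictH_eq_starHierarchy hLne ⟨_, Or.inl rfl, hL⟩ (fun x hx => ?_) ?_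
  · obtain ⟨i, hi⟩ := mem_iUnion.1 (hL hx)
    exact ⟨{x}, Or.inr (mem_iUnion.2 ⟨i, (hB i).2.2.1 x hi⟩),
      inter_eq_left.2 (singleton_subset_iff.2 hx)⟩
  · rintro A (rfl | hA)
    · exact Or.inl hL
    · obtain ⟨i, hA⟩ := mem_iUnion.1 hA
      exact Or.inr ((hsub i).anti fun u hu => ⟨hu.2, ((hB i).1 A hA).1 hu.1⟩)

lemma restrictH_regraftHierarchy_eq_starHierarchy (hB : ∀ i, IsHierarchy (Vs i) (Bs i))
    (hL : L ⊆ ⋃ i, Vs i) (hLne : L.Nonempty) (hsub : ∀ i, (L ∩ Vs i).Subsingleton)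
    (a b : α) :
    restrictH (regraftHierarchy (⋃ i, Vs i) Bs a b) L = starHierarchy L := by
  refine restrictH_eq_starHierarchy hLne ⟨_, Or.inl (Or.inl rfl), hL⟩ (fun x hx => ?_) ?_
  · have hxL : {x} ∩ L = {x} := inter_eq_left.2 (singleton_subset_iff.2 hx)
    by_cases hab : x ∈ ({a, b} : Set α)
    · rcases hab with rfl | rfl
      exacts [⟨{x}, Or.inl (Or.inr (Or.inl rfl)), hxL⟩,
        ⟨{x}, Or.inl (Or.inr (Or.inr rfl)), hxL⟩]
    · obtain ⟨i, hi⟩ := mem_iUnion.1 (hL hx)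
      have hdiff : {x} \ {a, b} = ({x} : Set α) := (disjoint_singleton_left.2 hab).sdiff_eq_left
      exact ⟨{x}, Or.inr (mem_iUnion.2 ⟨i, {x}, (hB i).2.2.1 x hi, hdiff.symm,
        singleton_nonempty x⟩), hxL⟩
  · rintro A ((rfl | rfl | rfl) | hA)
    · exact Or.inl hL
    · exact Or.inr (subsingleton_singleton.anti inter_subset_left)
    · exact Or.inr (subsingleton_singleton.anti inter_subset_left)
    · obtain ⟨i, A', hA', rfl, -⟩ := mem_iUnion.1 hA
      exact Or.inr ((hsub i).anti fun u hu => ⟨hu.2, ((hB i).1 A' hA').1 hu.1.1⟩)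

lemma ncard_inter_le_one_of_forall_subset (hfin : ∀ i, (Vs i).Finite)
    (hB : ∀ i, IsHierarchy (Vs i) (Bs i) ∧ (Bs i).ncard = 2 * (Vs i).ncard - 1)
    (hL : 3 ≤ L.ncard) (hsplit : ∀ i, ∀ A ∈ Bs i, ∀ p ∈ A ∩ L, ∀ q ∈ A ∩ L, p ≠ q → L ⊆ A)
    (i : ι) : (L ∩ Vs i).ncard ≤ 1 := by
  have hLVi : ¬ L ⊆ Vs i := fun hLVi => by
    obtain ⟨A, hA, p, hp, q, hq, hpq, hLA⟩ :=
      (hB i).1.exists_mem_splitting (hfin i) (hB i).2 hLVi hL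
    exact hLA (hsplit i A hA p hp q hq hpq)
  refine (ncard_le_one ((hfin i).inter_of_right L)).2 fun p hp q hq => ?_
  by_contra hpq
  exact hLVi (hsplit i _ (hB i).1.2.1 p ⟨hp.2, hp.1⟩ q ⟨hq.2, hq.1⟩ hpq)

end

end

theorem mast_control_general {α : Type*} (k : ℕ) (hk : 3 ≤ k)
    (Vs : Fin k → Set α)
    (hfin : ∀ i, (Vs i).Finite)
    (hdisj : ∀ i j, i ≠ j → Disjoint (Vs i) (Vs j))
    (Bs : Fin k → Set (Set α))
    -- each `Bᵢ` is a binary hierarchy on `Vᵢ` (binary ⇔ it has `2|Vᵢ| - 1` members)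
    (hB : ∀ i, IsHierarchy (Vs i) (Bs i) ∧ (Bs i).ncard = 2 * (Vs i).ncard - 1) :
    -- `V := V₁ ∪ ⋯ ∪ V_k`
    let V : Set α := ⋃ i, Vs i
    -- the hierarchy of the tree `C = ⟨B₁, …, B_k⟩`
    let HC : Set (Set α) := {V} ∪ ⋃ i, Bs i
    -- the hierarchy of the tree `C_{a,b}`
    let Hab : α → α → Set (Set α) := fun a b =>
      {V, {a}, {b}} ∪ ⋃ i, {S | ∃ A ∈ Bs i, S = A \ {a, b} ∧ S.Nonempty}
    ∀ L : Set α, L ⊆ V →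
      (((L.ncard = k ∧
          ∀ a ∈ V, ∀ b ∈ V, a ≠ b → restrictH (Hab a b) L = restrictH HC L) ↔
        (∀ i, (L ∩ Vs i).ncard = 1)) ∧
      ((L.ncard = k ∧
          ∀ a ∈ V, ∀ b ∈ V, a ≠ b → restrictH (Hab a b) L = restrictH HC L) →
        restrictH HC L = {L} ∪ {S | ∃ x ∈ L, S = {x}})) := by
  intro V HC Hab L hL
  have hsum : L.ncard = ∑ i, (L ∩ Vs i).ncard :=
    ncard_eq_sum_ncard_inter hfin (fun i j hij => hdisj i j hij) hL
  have hcard : (∀ i, (L ∩ Vs i).ncard = 1) → L.ncard = k := fun h => by simp [hsum, h]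
  have htransversal : (L.ncard = k ∧ ∀ a ∈ V, ∀ b ∈ V, a ≠ b →
      restrictH (Hab a b) L = restrictH HC L) → ∀ i, (L ∩ Vs i).ncard = 1 := by
    rintro ⟨hLk, hagree⟩
    refine eq_one_of_sum_eq_card (ncard_inter_le_one_of_forall_subset hfin hB (hLk ▸ hk)
      fun i A hA p hp q hq hpq => ?_) (by rw [← hsum, hLk, Fintype.card_fin])
    exact subset_of_restrictH_regraftHierarchy_eq hL hpq (hagree p (hL hp.2) q (hL hq.2) hpq)
      (Or.inr (mem_iUnion.2 ⟨i, hA⟩)) hp hq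
  have hstar (h : ∀ i, (L ∩ Vs i).ncard = 1) :
      restrictH HC L = starHierarchy L ∧ ∀ a b, restrictH (Hab a b) L = starHierarchy L := by
    have hsub (i : Fin k) : (L ∩ Vs i).Subsingleton := by
      obtain ⟨x, hx⟩ := ncard_eq_one.1 (h i)
      exact hx ▸ subsingleton_singleton
    have hLne : L.Nonempty := nonempty_of_ncard_ne_zero (by rw [hcard h]; omega)
    exact ⟨restrictH_eq_starHierarchy_of_subsingleton (fun i => (hB i).1) hL hLne hsub,
      restrictH_regraftHierarchy_eq_starHierarchy (fun i => (hB i).1) hL hLne hsub⟩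
  refine ⟨⟨htransversal, fun h => ⟨hcard h, fun a _ b _ _ => ?_⟩⟩,
    fun h => (hstar (htransversal h)).1⟩
  rw [(hstar h).1, (hstar h).2]

theorem mast_control {α : Type*} (k : ℕ) (hk : 3 ≤ k)
    (Vs : Fin k → Set α)
    (hfin : ∀ i, (Vs i).Finite)
    (hcard3 : ∀ i, 3 ≤ (Vs i).ncard)
    (hdisj : ∀ i j, i ≠ j → Disjoint (Vs i) (Vs j))
    (Bs : Fin k → Set (Set α))
    -- each `Bᵢ` is a binary hierarchy on `Vᵢ` (binary ⇔ it has `2|Vᵢ| - 1` members)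
    (hB : ∀ i, IsHierarchy (Vs i) (Bs i) ∧ (Bs i).ncard = 2 * (Vs i).ncard - 1) :
    -- `V := V₁ ∪ ⋯ ∪ V_k`
    let V : Set α := ⋃ i, Vs i
    -- the hierarchy of the tree `C = ⟨B₁, …, B_k⟩`
    let HC : Set (Set α) := {V} ∪ ⋃ i, Bs i
    -- the hierarchy of the tree `C_{a,b}`
    let Hab : α → α → Set (Set α) := fun a b =>
      {V, {a}, {b}} ∪ ⋃ i, {S | ∃ A ∈ Bs i, S = A \ {a, b} ∧ S.Nonempty}
    ∀ L : Set α, L ⊆ V →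
      (((L.ncard = k ∧
          ∀ a ∈ V, ∀ b ∈ V, a ≠ b → restrictH (Hab a b) L = restrictH HC L) ↔
        (∀ i, (L ∩ Vs i).ncard = 1)) ∧
      ((L.ncard = k ∧
          ∀ a ∈ V, ∀ b ∈ V, a ≠ b → restrictH (Hab a b) L = restrictH HC L) →
        restrictH HC L = {L} ∪ {S | ∃ x ∈ L, S = {x}})) :=
  mast_control_general k hk Vs hfin hdisj Bs hB
end

section
/- Let k ≥ 3 be an integer and let V₁, V₂, …, V_k be pairwise disjoint finite sets, each of cardinality at least 3, with union V. For each i ∈ {1,…,k} let Bᵢ be a binary hierarchy on Vᵢ. Let i₀ ≠ j₀ be two indices in {1,…,k}, let a ∈ V_{i₀} and b ∈ V_{j₀}, and set H_S := {V, {a,b}, {a}, {b}} ∪ ⋃_{i=1}^{k} {A ∖ {a,b} : A ∈ Bᵢ, A ∖ {a,b} ≠ ∅} (the hierarchy of the tree S obtained from ⟨B₁,…,B_k⟩ by removing the leaves a and b and re-grafting ⟨a,b⟩ as a new child of the root). Let cᵢ ∈ Vᵢ for each i ∈ {1,…,k} and let L := {c₁,…,c_k}. Then H_S|L = {L} ∪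 {{x} : x ∈ L} (i.e., the height-one star tree on L is a restriction of S) if and only if a ∉ L or b ∉ L. -/
theorem mast_selection {α : Type*} (k : ℕ) (hk : 3 ≤ k)
    (Vs : Fin k → Set α)
    (hfin : ∀ i, (Vs i).Finite)
    (hcard3 : ∀ i, 3 ≤ (Vs i).ncard)
    (hdisj : ∀ i j, i ≠ j → Disjoint (Vs i) (Vs j))
    (Bs : Fin k → Set (Set α))
    -- each `Bᵢ` is a binary hierarchy on `Vᵢ` (binary ⇔ it has `2|Vᵢ| - 1` members)
    (hB : ∀ i, IsHierarchy (Vs i) (Bs i) ∧ (Bs i).ncard = 2 * (Vs i).ncard - 1)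
    (i₀ j₀ : Fin k) (hij : i₀ ≠ j₀)
    (a b : α) (ha : a ∈ Vs i₀) (hb : b ∈ Vs j₀)
    (c : Fin k → α) (hc : ∀ i, c i ∈ Vs i) :
    -- `V := V₁ ∪ ⋯ ∪ V_k`
    let V : Set α := ⋃ i, Vs i
    -- the hierarchy of the tree `S` obtained from `⟨B₁, …, B_k⟩` by removing the
    -- leaves `a`, `b` and re-grafting `⟨a, b⟩` as a new child of the root
    let HS : Set (Set α) :=
      {V, {a, b}, {a}, {b}} ∪ ⋃ i, {S | ∃ A ∈ Bs i, S = A \ {a, b} ∧ S.Nonempty}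
    -- `L := {c₁, …, c_k}`
    let L : Set α := Set.range c
    (restrictH HS L = {L} ∪ {S | ∃ x ∈ L, S = {x}}) ↔ (a ∉ L ∨ b ∉ L) := by
  intro V HS L
  have hab : a ≠ b := fun h =>
    Set.disjoint_left.mp (hdisj i₀ j₀ hij) ha (h ▸ hb)
  have hcinj : Function.Injective c := by
    intro i j h
    by_contra hne
    exact Set.disjoint_left.mp (hdisj i j hne) (hc i) (h ▸ hc j)
  have hmemL : ∀ i, c i ∈ L := fun i => ⟨i, rfl⟩
  have hVsL : ∀ i, ∀ x ∈ L, x ∈ Vs i → x = c i := by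
    rintro i x ⟨j, rfl⟩ hx
    rcases eq_or_ne j i with h | h
    · rw [h]
    · exact absurd hx (Set.disjoint_left.mp (hdisj j i h) (hc j))
  have hLV : L ⊆ V := by
    rintro x ⟨i, rfl⟩
    exact Set.mem_iUnion.mpr ⟨i, hc i⟩
  have hVHS : V ∈ HS := Or.inl (Or.inl rfl)
  have habHS : ({a, b} : Set α) ∈ HS := Or.inl (Or.inr (Or.inl rfl))
  have haHS : ({a} : Set α) ∈ HS := Or.inl (Or.inr (Or.inr (Or.inl rfl)))
  have hbHS : ({b} : Set α) ∈ HS := Or.inl (Or.inr (Or.inr (Or.inr rfl)))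
  constructor
  · intro heq
    by_contra h
    push_neg at h
    obtain ⟨haL, hbL⟩ := h
    have hmem : ({a, b} : Set α) ∈ restrictH HS L := by
      refine ⟨{a, b}, habHS, ?_, ⟨a, by simp⟩⟩
      refine (Set.inter_eq_left.mpr ?_).symm
      rintro x (rfl | rfl) <;> assumption
    rw [heq] at hmem
    rcases hmem with hmem | ⟨x, hxL, hmem⟩
    · -- {a,b} = L : contradiction since L has ≥ 3 elements
      have h3 : ∀ t : Fin k, c t ∈ ({a, b} : Set α) := fun t => hmem ▸ hmemL t
      have e1 : (⟨0, by omega⟩ : Fin k) ≠ ⟨1, by omega⟩ := by simp [Fin.ext_iff]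
      have e2 : (⟨0, by omega⟩ : Fin k) ≠ ⟨2, by omega⟩ := by simp [Fin.ext_iff]
      have e3 : (⟨1, by omega⟩ : Fin k) ≠ ⟨2, by omega⟩ := by simp [Fin.ext_iff]
      rcases h3 ⟨0, by omega⟩ with h0 | h0 <;>
        rcases h3 ⟨1, by omega⟩ with h1 | h1 <;>
        rcases h3 ⟨2, by omega⟩ with h2 | h2 <;>
        first
          | exact e1 (hcinj (h0.trans h1.symm))
          | exact e2 (hcinj (h0.trans h2.symm))
          | exact e3 (hcinj (h1.trans h2.symm))
    · -- {a,b} = {x}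
      have h1 : a ∈ ({x} : Set α) := hmem ▸ (by simp)
      have h2 : b ∈ ({x} : Set α) := hmem ▸ (by simp)
      exact hab (h1.trans h2.symm)
  · intro habL
    ext S
    constructor
    · rintro ⟨A, hA, rfl, hne⟩
      rcases hA with ((rfl | rfl | rfl | rfl) | hA)
      · exact Or.inl (Set.inter_eq_right.mpr hLV)
      · -- A = {a,b}
        obtain ⟨x, hx1, hx2⟩ := hne
        rcases habL with haL | hbL
        · have hxb : x = b := by
            rcases hx1 with rfl | rfl
            · exact absurd hx2 haL
            · rfl
          refine Or.inr ⟨b, hxb ▸ hx2, ?_⟩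
          ext y
          constructor
          · rintro ⟨(rfl | rfl), hyL⟩
            · exact absurd hyL haL
            · rfl
          · rintro rfl
            exact ⟨Or.inr rfl, hxb ▸ hx2⟩
        · have hxa : x = a := by
            rcases hx1 with rfl | rfl
            · rfl
            · exact absurd hx2 hbL
          refine Or.inr ⟨a, hxa ▸ hx2, ?_⟩
          ext y
          constructor
          · rintro ⟨(rfl | rfl), hyL⟩
            · rfl
            · exact absurd hyL hbL
          · rintro rfl
            exact ⟨Or.inl rfl, hxa ▸ hx2⟩
      · -- A = {a}
        obtain ⟨x, hx1, hx2⟩ := hne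
        rcases hx1 with rfl
        refine Or.inr ⟨x, hx2, ?_⟩
        ext y
        constructor
        · rintro ⟨rfl, _⟩; rfl
        · rintro rfl; exact ⟨rfl, hx2⟩
      · -- A = {b}
        obtain ⟨x, hx1, hx2⟩ := hne
        rcases hx1 with rfl
        refine Or.inr ⟨x, hx2, ?_⟩
        ext y
        constructor
        · rintro ⟨rfl, _⟩; rfl
        · rintro rfl; exact ⟨rfl, hx2⟩
      · -- A from some Bs i
        obtain ⟨i, A', hA', rfl, hne'⟩ := Set.mem_iUnion.mp hA
        have hsub : A' ⊆ Vs i := ((hB i).1.1 A' hA').1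
        obtain ⟨x, hx1, hx2⟩ := hne
        have hxc : x = c i := hVsL i x hx2 (hsub hx1.1)
        refine Or.inr ⟨c i, hmemL i, ?_⟩
        ext y
        constructor
        · rintro ⟨hy1, hy2⟩
          exact hVsL i y hy2 (hsub hy1.1)
        · rintro rfl
          exact ⟨hxc ▸ hx1, hmemL i⟩
    · rintro (rfl | ⟨x, hxL, rfl⟩)
      · exact ⟨V, hVHS, (Set.inter_eq_right.mpr hLV).symm, ⟨c i₀, hmemL i₀⟩⟩
      · obtain ⟨i, rfl⟩ := hxL
        rcases eq_or_ne (c i) a with hca | hca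
        · refine ⟨{a}, haHS, ?_, ⟨c i, by simp [hca]⟩⟩
          rw [hca]
          exact (Set.inter_eq_left.mpr (Set.singleton_subset_iff.mpr (hca ▸ hmemL i))).symm
        rcases eq_or_ne (c i) b with hcb | hcb
        · refine ⟨{b}, hbHS, ?_, ⟨c i, by simp [hcb]⟩⟩
          rw [hcb]
          exact (Set.inter_eq_left.mpr (Set.singleton_subset_iff.mpr (hcb ▸ hmemL i))).symm
        · have hci : c i ∈ ({c i} \ {a, b} : Set α) :=
            ⟨rfl, by rintro (rfl | rfl) <;> [exact hca rfl; exact hcb rfl]⟩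
          refine ⟨{c i} \ {a, b}, ?_, ?_, ⟨c i, rfl⟩⟩
          · exact Or.inr (Set.mem_iUnion.mpr ⟨i, {c i}, (hB i).1.2.2.1 (c i) (hc i), rfl, ⟨c i, hci⟩⟩)
          · have hd : ({c i} \ {a, b} : Set α) = {c i} := by
              ext y
              simp only [Set.mem_diff, Set.mem_singleton_iff, Set.mem_insert_iff]
              constructor
              · exact fun h => h.1
              · rintro rfl
                exact ⟨rfl, by rintro (rfl | rfl) <;> [exact hca rfl; exact hcb rfl]⟩
            rw [hd]
            exact (Set.inter_eq_left.mpr (Set.singleton_subset_iff.mpr (hmemL i))).symm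
end
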